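/- arXiv:2205.10500 — 7 statements merged into one kernel-verified Lean document; each statement's English description precedes it below -/
import Mathlib

section
/- For any real matrix X of size n×p, with A(X) := (1/8) X (15 I_p - 10 X^T X + 3 (X^T X)^2), it holds that A(X)^T A(X) - I_p = (1/64) (X^T X - I_p)^3 (9 (X^T X)^2 - 33 (X^T X) + 64 I_p). -/
open Matrix

/-- The constraint dissolving mapping `A(X) = (1/8) X (15 Iₚ - 10 XᵀX + 3 (XᵀX)²)`. -/
noncomputable def cdMap {n p : ℕ} (X : Matrix (Fin n) (Fin p) ℝ) : Matrix (Fin n) (Fin p) ℝ :=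
  (1 / 8 : ℝ) • (X * ((15 : ℝ) • (1 : Matrix (Fin p) (Fin p) ℝ)
    - (10 : ℝ) • (Xᵀ * X) + (3 : ℝ) • (Xᵀ * X) ^ 2))

/-- The scalar identity `q(t)² t - 64 = (t - 1)³ (9 t² - 33 t + 64)` for `q(t) = 15 - 10 t + 3 t²`;
only powers of `M` occur, so it holds in any algebra. -/
theorem cd_polynomial_identity {𝕜 A : Type*} [CommRing 𝕜] [Ring A] [Algebra 𝕜 A] (M : A) :
    ((15 : 𝕜) • 1 - (10 : 𝕜) • M + (3 : 𝕜) • M ^ 2) * M *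
        ((15 : 𝕜) • 1 - (10 : 𝕜) • M + (3 : 𝕜) • M ^ 2) - (64 : 𝕜) • 1 =
      (M - 1) ^ 3 * ((9 : 𝕜) • M ^ 2 - (33 : 𝕜) • M + (64 : 𝕜) • 1) := by
  noncomm_ring
  module

theorem transpose_mul_mul_self_mul {m n R : Type*} [Fintype m] [Fintype n] [CommSemiring R]
    (X : Matrix m n R) {P : Matrix n n R} (hP : P.IsSymm) :
    (X * P)ᵀ * (X * P) = P * (Xᵀ * X) * P := by
  simp only [transpose_mul, hP.eq, Matrix.mul_assoc]

theorem stmt_1 {n p : ℕ} (X : Matrix (Fin n) (Fin p) ℝ) :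
    (cdMap X)ᵀ * cdMap X - 1 =
      (1 / 64 : ℝ) • ((Xᵀ * X - 1) ^ 3 *
        ((9 : ℝ) • (Xᵀ * X) ^ 2 - (33 : ℝ) • (Xᵀ * X)
          + (64 : ℝ) • (1 : Matrix (Fin p) (Fin p) ℝ))) := by
  set M := Xᵀ * X
  set P : Matrix (Fin p) (Fin p) ℝ := (15 : ℝ) • 1 - (10 : ℝ) • M + (3 : ℝ) • M ^ 2
  have hM : M.IsSymm := by rw [IsSymm, transpose_mul, transpose_transpose]
  have hP : P.IsSymm := ((isSymm_one.smul _).sub (hM.smul _)).add ((hM.pow 2).smul _)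
  have hA : (cdMap X)ᵀ * cdMap X = (1 / 64 : ℝ) • (P * M * P) := by
    change ((1 / 8 : ℝ) • (X * P))ᵀ * ((1 / 8 : ℝ) • (X * P)) = _
    rw [transpose_smul, Matrix.smul_mul, Matrix.mul_smul, smul_smul, transpose_mul_mul_self_mul X hP]
    norm_num
    rfl
  rw [hA, ← cd_polynomial_identity, smul_sub, smul_smul]
  norm_num
  rfl
end

section
/- For any X ∈ ℝ^{n×p} with ‖X^T X - I_p‖_F ≤ 1, the mapping A(X) := (1/8) X (15 I_p - 10 X^T X + 3 (X^T X)^2) satisfies ‖A(X)^T A(X) - I_p‖_F ≤ ‖X^T X - I_p‖_F^3. -/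
open Matrix

/-- Frobenius norm of a real matrix. -/
noncomputable def frob {m n : ℕ} (X : Matrix (Fin m) (Fin n) ℝ) : ℝ :=
  Real.sqrt (∑ i, ∑ j, (X i j) ^ 2)

/-!
With `q(t) = 15 - 10t + 3t²`, both `XᵀX - I` and `A(X)ᵀA(X) - I = (1/64) q(XᵀX) XᵀX q(XᵀX) - I`
are polynomials in the symmetric matrix `XᵀX`, so their Frobenius norms are the `ℓ²` norms of the
values of these polynomials at the eigenvalues `λᵢ` of `XᵀX`. The scalar polynomial factors as
`t q(t)² / 64 - 1 = (t - 1)³ (9t² - 33t + 64) / 64`, and the second factor lies in `[0, 1]` on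
`[0, 2]`, which contains every `λᵢ`. Hence the `i`-th squared value is at most `aᵢ³` with
`aᵢ = (λᵢ - 1)²`, and `∑ aᵢ³ ≤ (∑ aᵢ)³`.
-/

open Polynomial Unitary

lemma Finset.sum_pow_succ_le_pow_succ_sum_of_nonneg {ι R : Type*} [CommSemiring R]
    [PartialOrder R] [IsOrderedRing R] {s : Finset ι} {f : ι → R} (hf : ∀ i ∈ s, 0 ≤ f i)
    (n : ℕ) :
    ∑ i ∈ s, f i ^ (n + 1) ≤ (∑ i ∈ s, f i) ^ (n + 1) := by
  calc ∑ i ∈ s, f i ^ (n + 1) = ∑ i ∈ s, f i ^ n * f i := by simp only [pow_succ]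
    _ ≤ ∑ i ∈ s, (∑ j ∈ s, f j) ^ n * f i := Finset.sum_le_sum fun i hi =>
        mul_le_mul_of_nonneg_right (pow_le_pow_left₀ (hf i hi) (single_le_sum hf hi) n) (hf i hi)
    _ = (∑ i ∈ s, f i) ^ (n + 1) := by rw [← Finset.mul_sum, pow_succ]

lemma sum_sq_eq_trace_transpose_mul_self {m n : ℕ} (A : Matrix (Fin m) (Fin n) ℝ) :
    ∑ i, ∑ j, A i j ^ 2 = (Aᵀ * A).trace := by
  simp only [trace, diag, mul_apply, transpose_apply, sq]
  exact Finset.sum_comm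

lemma frob_conjStarAlgAut {n : ℕ} (u : unitary (Matrix (Fin n) (Fin n) ℝ))
    (A : Matrix (Fin n) (Fin n) ℝ) : frob (conjStarAlgAut ℝ _ u A) = frob A := by
  have hu : (star u : Matrix (Fin n) (Fin n) ℝ) * u = 1 := coe_star_mul_self u
  simp only [star_eq_conjTranspose, conjTranspose_eq_transpose_of_trivial] at hu
  simp only [frob, sum_sq_eq_trace_transpose_mul_self, conjStarAlgAut_apply, star_eq_conjTranspose,
    conjTranspose_eq_transpose_of_trivial, transpose_mul, transpose_transpose, Matrix.mul_assoc]
  rw [← Matrix.mul_assoc (u : Matrix (Fin n) (Fin n) ℝ)ᵀ, hu, Matrix.one_mul, trace_mul_comm,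
    Matrix.mul_assoc, Matrix.mul_assoc, hu, Matrix.mul_one, trace_mul_comm]

lemma frob_diagonal {n : ℕ} (d : Fin n → ℝ) : frob (diagonal d) = √(∑ i, d i ^ 2) := by
  simp [frob, diagonal_apply, ite_pow]

lemma aeval_diagonal {n R : Type*} [Fintype n] [DecidableEq n] [CommSemiring R] (d : n → R)
    (q : R[X]) : aeval (diagonal d) q = diagonal fun i => q.eval (d i) := by
  rw [← diagonalAlgHom_apply (R := R), aeval_algHom_apply, aeval_pi_apply]
  simp [coe_aeval_eq_eval]

lemma Matrix.IsHermitian.frob_aeval {n : ℕ} {M : Matrix (Fin n) (Fin n) ℝ} (hM : M.IsHermitian)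
    (q : ℝ[X]) : frob (aeval M q) = √(∑ i, q.eval (hM.eigenvalues i) ^ 2) := by
  rw [← frob_conjStarAlgAut (star hM.eigenvectorUnitary), ← aeval_algHom_apply,
    hM.conjStarAlgAut_star_eigenvectorUnitary, aeval_diagonal, frob_diagonal]
  rfl

noncomputable def cdPoly : ℝ[X] := C 15 - C 10 * X + C 3 * X ^ 2

noncomputable def cdGramPoly : ℝ[X] := C (1 / 64) * (cdPoly * X * cdPoly) - 1

lemma cdMap_eq_mul_aeval {n p : ℕ} (Y : Matrix (Fin n) (Fin p) ℝ) :
    cdMap Y = (1 / 8 : ℝ) • (Y * aeval (Yᵀ * Y) cdPoly) := by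
  simp [cdMap, cdPoly, Algebra.algebraMap_eq_smul_one]

lemma transpose_cdMap_mul_cdMap_sub_one {n p : ℕ} (Y : Matrix (Fin n) (Fin p) ℝ) :
    (cdMap Y)ᵀ * cdMap Y - 1 = aeval (Yᵀ * Y) cdGramPoly := by
  have hsymm : (aeval (Yᵀ * Y) cdPoly)ᵀ = aeval (Yᵀ * Y) cdPoly := by
    simp [cdPoly, Algebra.algebraMap_eq_smul_one, transpose_pow]
  simp only [cdMap_eq_mul_aeval, cdGramPoly, transpose_smul, transpose_mul, hsymm,
    Matrix.smul_mul, Matrix.mul_smul, smul_smul, map_sub, map_mul, map_one, aeval_X, aeval_C,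
    Algebra.algebraMap_eq_smul_one, Matrix.mul_assoc]
  norm_num

lemma cdGramPoly_eval_sq_le {t : ℝ} (ht : (t - 1) ^ 2 ≤ 1) :
    cdGramPoly.eval t ^ 2 ≤ ((t - 1) ^ 2) ^ 3 := by
  have factor : cdGramPoly.eval t = (t - 1) ^ 3 * ((9 * t ^ 2 - 33 * t + 64) / 64) := by
    simp only [cdGramPoly, cdPoly, eval_sub, eval_mul, eval_add, eval_C, eval_X, eval_pow, eval_one]
    ring
  have h0 : 0 ≤ t := by nlinarith
  have h2 : t ≤ 2 := by nlinarith
  have hlo : 0 ≤ (9 * t ^ 2 - 33 * t + 64) / 64 := by nlinarith [sq_nonneg (6 * t - 11)]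
  have hhi : (9 * t ^ 2 - 33 * t + 64) / 64 ≤ 1 := by nlinarith
  rw [factor, mul_pow, ← pow_mul, pow_mul']
  exact mul_le_of_le_one_right (by positivity) (pow_le_one₀ hlo hhi)

theorem stmt_2 {n p : ℕ} (X : Matrix (Fin n) (Fin p) ℝ)
    (h : frob (Xᵀ * X - 1) ≤ 1) :
    frob ((cdMap X)ᵀ * cdMap X - 1) ≤ (frob (Xᵀ * X - 1)) ^ 3 := by
  have hM : (Xᵀ * X).IsHermitian := by
    simpa [conjTranspose_eq_transpose_of_trivial] using isHermitian_conjTranspose_mul_self X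
  have hdist : frob (Xᵀ * X - 1) = √(∑ i, (hM.eigenvalues i - 1) ^ 2) := by
    have := hM.frob_aeval (Polynomial.X - 1)
    rw [map_sub, aeval_X, map_one] at this
    simpa only [eval_sub, eval_X, eval_one] using this
  have hdist_le : ∑ i, (hM.eigenvalues i - 1) ^ 2 ≤ 1 := Real.sqrt_le_one.mp (hdist ▸ h)
  have hsq_le (i : Fin p) : (hM.eigenvalues i - 1) ^ 2 ≤ ∑ i, (hM.eigenvalues i - 1) ^ 2 :=
    Finset.single_le_sum (fun j _ => sq_nonneg (hM.eigenvalues j - 1)) (Finset.mem_univ i)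
  rw [transpose_cdMap_mul_cdMap_sub_one, hM.frob_aeval, hdist, Real.sqrt_le_left (by positivity),
    ← pow_mul, pow_mul', Real.sq_sqrt (Finset.sum_nonneg fun i _ => sq_nonneg _)]
  calc
    ∑ i, cdGramPoly.eval (hM.eigenvalues i) ^ 2 ≤ ∑ i, ((hM.eigenvalues i - 1) ^ 2) ^ 3 :=
      Finset.sum_le_sum fun i _ => cdGramPoly_eval_sq_le ((hsq_le i).trans hdist_le)
    _ ≤ (∑ i, (hM.eigenvalues i - 1) ^ 2) ^ 3 :=
      Finset.sum_pow_succ_le_pow_succ_sum_of_nonneg (fun i _ => sq_nonneg _) 2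
end

section
/- For X in the Stiefel manifold S_{n,p} and any D ∈ ℝ^{n×p}, the directional derivative (Jacobian) of A(X) = (1/8) X (15 I_p - 10 X^T X + 3 (X^T X)^2) in direction D equals D - X Φ(D^T X), where Φ(M) = (M + M^T)/2. -/
/-!
Expanding `15 - 10 G + 3 G²` around `G = 1` gives `A(Y) = Y - ½ Y E + ⅜ Y E²` with `E = YᵀY - 1`.
For `Y = X + tD` on the Stiefel manifold, `E = t (DᵀX + XᵀD + t DᵀD)` is divisible by `t`, so the
difference quotient of `A` is a polynomial in `t`; its value at `t = 0` is `D - ½ X (DᵀX + XᵀD)`.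
-/

open Matrix

/-- The symmetrization operator `Φ(M) = (M + Mᵀ)/2`. -/
noncomputable def symPart {p : ℕ} (M : Matrix (Fin p) (Fin p) ℝ) : Matrix (Fin p) (Fin p) ℝ :=
  (1 / 2 : ℝ) • (M + Mᵀ)

section

variable {n p : ℕ}

theorem cdMap_eq_sub_add (Y : Matrix (Fin n) (Fin p) ℝ) :
    cdMap Y = Y - (1 / 2 : ℝ) • (Y * (Yᵀ * Y - 1)) + (3 / 8 : ℝ) • (Y * (Yᵀ * Y - 1) ^ 2) := by
  have hpoly : ∀ G : Matrix (Fin p) (Fin p) ℝ,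
      (15 : ℝ) • (1 : Matrix (Fin p) (Fin p) ℝ) - (10 : ℝ) • G + (3 : ℝ) • G ^ 2
      = (8 : ℝ) • 1 - (4 : ℝ) • (G - 1) + (3 : ℝ) • (G - 1) ^ 2 := by
    intro G; simp only [sq, sub_mul, mul_sub, one_mul, mul_one]; module
  rw [cdMap, hpoly]
  simp only [Matrix.mul_add, Matrix.mul_sub, Matrix.mul_smul, Matrix.mul_one, smul_add, smul_sub,
    smul_smul]
  module

theorem transpose_mul_self_add_smul_sub_one {X : Matrix (Fin n) (Fin p) ℝ} (hX : Xᵀ * X = 1)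
    (D : Matrix (Fin n) (Fin p) ℝ) (t : ℝ) :
    (X + t • D)ᵀ * (X + t • D) - 1 = t • (Dᵀ * X + Xᵀ * D + t • (Dᵀ * D)) := by
  simp only [transpose_add, transpose_smul, Matrix.add_mul, Matrix.mul_add, Matrix.smul_mul,
    Matrix.mul_smul, hX, smul_add, smul_smul]
  abel

theorem cdMap_add_smul_sub {X : Matrix (Fin n) (Fin p) ℝ} (hX : Xᵀ * X = 1)
    (D : Matrix (Fin n) (Fin p) ℝ) (t : ℝ) :
    cdMap (X + t • D) - cdMap X =
      t • (D - (1 / 2 : ℝ) • ((X + t • D) * (Dᵀ * X + Xᵀ * D + t • (Dᵀ * D)))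
        + (3 / 8 * t : ℝ) • ((X + t • D) * (Dᵀ * X + Xᵀ * D + t • (Dᵀ * D)) ^ 2)) := by
  rw [cdMap_eq_sub_add, cdMap_eq_sub_add X, transpose_mul_self_add_smul_sub_one hX, hX, sub_self]
  simp only [sq, Matrix.smul_mul, Matrix.mul_smul, smul_smul, Matrix.mul_zero, smul_zero]
  module

theorem mul_symPart_transpose_mul (X D : Matrix (Fin n) (Fin p) ℝ) :
    X * symPart (Dᵀ * X) = (1 / 2 : ℝ) • (X * (Dᵀ * X + Xᵀ * D)) := by
  rw [symPart, transpose_mul, transpose_transpose, Matrix.mul_smul]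

end

theorem stmt_7 {n p : ℕ} (X : Matrix (Fin n) (Fin p) ℝ) (hX : Xᵀ * X = 1)
    (D : Matrix (Fin n) (Fin p) ℝ) :
    Filter.Tendsto (fun t : ℝ => t⁻¹ • (cdMap (X + t • D) - cdMap X))
      (nhdsWithin 0 {0}ᶜ) (nhds (D - X * symPart (Dᵀ * X))) := by
  set quotient : ℝ → Matrix (Fin n) (Fin p) ℝ := fun t =>
    D - (1 / 2 : ℝ) • ((X + t • D) * (Dᵀ * X + Xᵀ * D + t • (Dᵀ * D)))
      + (3 / 8 * t : ℝ) • ((X + t • D) * (Dᵀ * X + Xᵀ * D + t • (Dᵀ * D)) ^ 2) with hquotient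
  have hlim : Filter.Tendsto quotient (nhds 0) (nhds (D - X * symPart (Dᵀ * X))) := by
    have hcont : Continuous quotient := by fun_prop
    simpa [hquotient, mul_symPart_transpose_mul] using hcont.tendsto 0
  refine (hlim.mono_left nhdsWithin_le_nhds).congr' ?_
  filter_upwards [self_mem_nhdsWithin] with t ht
  rw [cdMap_add_smul_sub hX, smul_smul, inv_mul_cancel₀ ht, one_smul]
end

section
/- For any X ∈ ℝ^{n×p} and any D ∈ ℝ^{n×p}, the Jacobian of A(X) = (1/8) X (15 I_p - 10 X^T X + 3 (X^T X)^2) in direction D is J_A(X)[D] = (1/8) D (15 I_p - 10 X^T X + 3 (X^T X)^2) - X Φ(X^T D) + (3/2) X Φ(Φ(X^T D)(X^T X - I_p)), where Φ(M) = (M + M^T)/2. -/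
/-!
`A` is a matrix polynomial, so its derivative along `t ↦ X + t D` follows from the product rule:
with `G = XᵀX` and `S = Φ(XᵀD)`, the Gram matrix moves with velocity `2S`, and
`A' = (1/8) (D w(G) + X (-20 S + 6 (SG + GS)))` for `w(G) = 15 - 10 G + 3 G²`.
As `S` and `G` are symmetric, `Φ(S (G - 1)) = (SG + GS)/2 - S`, which rewrites the `X`-term
as `-X S + (3/2) X Φ(S (G - 1))`.
-/

open Matrix

open Filter Topology

-- `cdMap X = (1 / 8) • (X * cdWeight (Xᵀ * X))` holds definitionally.
noncomputable def cdWeight {p : ℕ} (G : Matrix (Fin p) (Fin p) ℝ) : Matrix (Fin p) (Fin p) ℝ :=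
  (15 : ℝ) • 1 - (10 : ℝ) • G + (3 : ℝ) • G ^ 2

section Calculus

variable {l m n : Type*} {t : ℝ}

theorem Matrix.hasDerivAt_iff [Fintype n] {M : ℝ → Matrix m n ℝ} {M' : Matrix m n ℝ} :
    HasDerivAt M M' t ↔ ∀ i j, HasDerivAt (fun s => M s i j) (M' i j) t :=
  (hasDerivAt_pi (φ := fun s => (M s : m → n → ℝ))).trans <|
    forall_congr' fun i => hasDerivAt_pi (φ := fun s => (M s i : n → ℝ))

theorem HasDerivAt.matrix_transpose [Fintype m] [Fintype n] {M : ℝ → Matrix m n ℝ}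
    {M' : Matrix m n ℝ} (hM : HasDerivAt M M' t) : HasDerivAt (fun s => (M s)ᵀ) M'ᵀ t :=
  Matrix.hasDerivAt_iff.2 fun i j => Matrix.hasDerivAt_iff.1 hM j i

theorem HasDerivAt.matrix_mul [Fintype m] [Fintype n] {M : ℝ → Matrix l m ℝ} {N : ℝ → Matrix m n ℝ}
    {M' : Matrix l m ℝ} {N' : Matrix m n ℝ} (hM : HasDerivAt M M' t) (hN : HasDerivAt N N' t) :
    HasDerivAt (fun s => M s * N s) (M' * N t + M t * N') t := by
  refine Matrix.hasDerivAt_iff.2 fun i j => ?_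
  simp only [mul_apply, Matrix.add_apply, ← Finset.sum_add_distrib]
  exact HasDerivAt.fun_sum fun k _ =>
    (Matrix.hasDerivAt_iff.1 hM i k).mul (Matrix.hasDerivAt_iff.1 hN k j)

theorem HasDerivAt.matrix_tendsto_slope_zero [Fintype m] [Fintype n] {M : ℝ → Matrix m n ℝ}
    {M' : Matrix m n ℝ} (hM : HasDerivAt M M' t) :
    Tendsto (fun s : ℝ => s⁻¹ • (M (t + s) - M t)) (𝓝[≠] 0) (𝓝 M') :=
  HasDerivAt.tendsto_slope_zero (F := m → n → ℝ) hM

end Calculus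

section SymPart

variable {p : ℕ}

theorem isSymm_symPart (M : Matrix (Fin p) (Fin p) ℝ) : (symPart M).IsSymm :=
  (isSymm_add_transpose_self M).smul _

theorem two_smul_symPart (M : Matrix (Fin p) (Fin p) ℝ) : (2 : ℝ) • symPart M = M + Mᵀ := by
  rw [symPart, smul_smul]
  norm_num

theorem symPart_mul_of_isSymm {S G : Matrix (Fin p) (Fin p) ℝ} (hS : S.IsSymm) (hG : G.IsSymm) :
    symPart (S * G) = (1 / 2 : ℝ) • (S * G + G * S) := by
  rw [symPart, transpose_mul, hS.eq, hG.eq]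

theorem mul_cdWeight_deriv_eq {n : ℕ} {S G : Matrix (Fin p) (Fin p) ℝ} (hS : S.IsSymm)
    (hG : G.IsSymm) (X : Matrix (Fin n) (Fin p) ℝ) :
    (1 / 8 : ℝ) •
        (X * ((-10 : ℝ) • ((2 : ℝ) • S) + (3 : ℝ) • ((2 : ℝ) • S * G + G * ((2 : ℝ) • S))))
      = -(X * S) + (3 / 2 : ℝ) • (X * symPart (S * (G - 1))) := by
  rw [symPart_mul_of_isSymm hS (hG.sub isSymm_one)]
  simp only [Matrix.mul_add, Matrix.mul_sub, Matrix.sub_mul, Matrix.mul_smul, Matrix.smul_mul,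
    Matrix.mul_one, Matrix.one_mul, smul_add, smul_sub, ← Matrix.mul_assoc]
  module

end SymPart

section Jacobian

-- The entrywise sup norm induces the usual topology on matrices; it is only needed to apply the
-- one-variable calculus of normed spaces.
attribute [local instance] Matrix.normedAddCommGroup Matrix.normedSpace

variable {n p : ℕ} {t : ℝ}

theorem Matrix.hasDerivAt_add_smul (X D : Matrix (Fin n) (Fin p) ℝ) :
    HasDerivAt (fun s : ℝ => X + s • D) D t := by
  have h := ((hasDerivAt_id' t).smul_const D).const_add X
  rwa [one_smul] at h

theorem HasDerivAt.transpose_mul_self {Y : ℝ → Matrix (Fin n) (Fin p) ℝ}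
    {Y' : Matrix (Fin n) (Fin p) ℝ} (hY : HasDerivAt Y Y' t) :
    HasDerivAt (fun s => (Y s)ᵀ * Y s) ((2 : ℝ) • symPart ((Y t)ᵀ * Y')) t := by
  rw [two_smul_symPart, transpose_mul, transpose_transpose, add_comm]
  exact hY.matrix_transpose.matrix_mul hY

theorem hasDerivAt_cdWeight {G : ℝ → Matrix (Fin p) (Fin p) ℝ} {G' : Matrix (Fin p) (Fin p) ℝ}
    (hG : HasDerivAt G G' t) :
    HasDerivAt (fun s => cdWeight (G s)) ((-10 : ℝ) • G' + (3 : ℝ) • (G' * G t + G t * G')) t := by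
  have hsq : HasDerivAt (fun s => G s ^ 2) (G' * G t + G t * G') t := by
    simpa only [pow_two] using hG.matrix_mul hG
  have h := ((hasDerivAt_const t ((15 : ℝ) • 1 : Matrix (Fin p) (Fin p) ℝ)).sub
    (hG.const_smul (10 : ℝ))).add (hsq.const_smul (3 : ℝ))
  rwa [zero_sub, ← neg_smul] at h

theorem hasDerivAt_cdMap {Y : ℝ → Matrix (Fin n) (Fin p) ℝ} {Y' : Matrix (Fin n) (Fin p) ℝ}
    (hY : HasDerivAt Y Y' t) :
    HasDerivAt (fun s => cdMap (Y s))
      ((1 / 8 : ℝ) • (Y' * cdWeight ((Y t)ᵀ * Y t)) - Y t * symPart ((Y t)ᵀ * Y')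
        + (3 / 2 : ℝ) • (Y t * symPart (symPart ((Y t)ᵀ * Y') * ((Y t)ᵀ * Y t - 1)))) t := by
  have hGram : ((Y t)ᵀ * Y t).IsSymm := by simp [IsSymm, transpose_mul]
  refine ((hY.matrix_mul (hasDerivAt_cdWeight hY.transpose_mul_self)).const_smul
    (1 / 8 : ℝ)).congr_deriv ?_
  rw [smul_add, mul_cdWeight_deriv_eq (isSymm_symPart _) hGram, ← add_assoc, ← sub_eq_add_neg]

end Jacobian

theorem stmt_8 {n p : ℕ} (X D : Matrix (Fin n) (Fin p) ℝ) :
    Filter.Tendsto (fun t : ℝ => t⁻¹ • (cdMap (X + t • D) - cdMap X))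
      (nhdsWithin 0 {0}ᶜ)
      (nhds ((1 / 8 : ℝ) • (D * ((15 : ℝ) • (1 : Matrix (Fin p) (Fin p) ℝ)
          - (10 : ℝ) • (Xᵀ * X) + (3 : ℝ) • (Xᵀ * X) ^ 2))
        - X * symPart (Xᵀ * D)
        + (3 / 2 : ℝ) • (X * symPart (symPart (Xᵀ * D) * (Xᵀ * X - 1))))) := by
  have h := (hasDerivAt_cdMap (Matrix.hasDerivAt_add_smul X D (t := 0))).matrix_tendsto_slope_zero
  simp only [zero_add, zero_smul, add_zero] at h
  exact h
end

section
/- For any X ∈ ℝ^{n×p}, ‖X - P(X)‖_F ≤ ‖X^T X - I_p‖_F, where P(X) = U V^T denotes the polar factor (projection onto the Stiefel manifold) obtained from the economical SVD X = U Σ V^T. -/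
/-!
Both sides diagonalize in the SVD: `X - U Vᵀ = U (Σ - I) Vᵀ` and `XᵀX - I = V (Σ² - I) Vᵀ`.
Multiplying by matrices with orthonormal columns does not change the Frobenius norm, so the claim
reduces to `∑ (σᵢ - 1)² ≤ ∑ (σᵢ² - 1)²`, which holds termwise because `|σ - 1| ≤ |σ - 1| (σ + 1)`
for `σ ≥ 0`.
-/

open Matrix

theorem abs_sub_one_le_abs_sq_sub_one {R : Type*} [Ring R] [LinearOrder R]
    [IsStrictOrderedRing R] {x : R} (hx : 0 ≤ x) : |x - 1| ≤ |x ^ 2 - 1| := by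
  rw [show x ^ 2 - 1 = (x - 1) * (x + 1) by noncomm_ring, abs_mul,
    abs_of_pos (add_pos_of_nonneg_of_pos hx one_pos)]
  exact le_mul_of_one_le_right (abs_nonneg _) (le_add_of_nonneg_left hx)

namespace Matrix

variable {m n R : Type*} [Fintype m] [Fintype n] [DecidableEq n] [CommRing R]

omit [DecidableEq n] in
theorem sum_sum_sq_eq_trace_transpose_mul (A : Matrix m n R) :
    ∑ i, ∑ j, A i j ^ 2 = trace (Aᵀ * A) := by
  rw [trace, Finset.sum_comm]
  simp [mul_apply, pow_two]

theorem sum_sum_sq_mul_diagonal_mul_transpose {U : Matrix m n R} {V : Matrix n n R}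
    (hU : Uᵀ * U = 1) (hV : Vᵀ * V = 1) (d : n → R) :
    ∑ i, ∑ j, (U * diagonal d * Vᵀ) i j ^ 2 = ∑ i, d i ^ 2 := by
  have hgram : (U * diagonal d * Vᵀ)ᵀ * (U * diagonal d * Vᵀ)
      = V * (diagonal d * diagonal d) * Vᵀ := by
    simp only [transpose_mul, transpose_transpose, diagonal_transpose, Matrix.mul_assoc]
    rw [← Matrix.mul_assoc Uᵀ U, hU, Matrix.one_mul]
  rw [sum_sum_sq_eq_trace_transpose_mul, hgram, trace_mul_cycle, ← Matrix.mul_assoc, hV,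
    Matrix.one_mul, diagonal_mul_diagonal, trace_diagonal]
  simp only [pow_two]

omit [Fintype m] in
theorem mul_diagonal_mul_transpose_sub (U : Matrix m n R) (V : Matrix n n R) (d : n → R) :
    U * diagonal d * Vᵀ - U * Vᵀ = U * diagonal (fun i => d i - 1) * Vᵀ := by
  have hdiag : diagonal (fun i => d i - 1) = diagonal d - 1 := by
    rw [← diagonal_one, diagonal_sub]
  rw [hdiag, Matrix.mul_sub, Matrix.mul_one, Matrix.sub_mul]

theorem gram_mul_diagonal_mul_transpose_sub_one {U : Matrix m n R} {V : Matrix n n R}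
    (hU : Uᵀ * U = 1) (hV : V * Vᵀ = 1) (d : n → R) :
    (U * diagonal d * Vᵀ)ᵀ * (U * diagonal d * Vᵀ) - 1
      = V * diagonal (fun i => d i ^ 2 - 1) * Vᵀ := by
  calc (U * diagonal d * Vᵀ)ᵀ * (U * diagonal d * Vᵀ) - 1
      = V * diagonal d * (Uᵀ * U) * diagonal d * Vᵀ - V * Vᵀ := by
        simp only [transpose_mul, transpose_transpose, diagonal_transpose, Matrix.mul_assoc, hV]
    _ = V * diagonal (fun i => d i ^ 2) * Vᵀ - V * Vᵀ := by
        rw [hU, Matrix.mul_one, Matrix.mul_assoc V, diagonal_mul_diagonal]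
        simp only [pow_two]
    _ = V * diagonal (fun i => d i ^ 2 - 1) * Vᵀ := mul_diagonal_mul_transpose_sub _ _ _

end Matrix

theorem frob_mul_diagonal_mul_transpose {m n : ℕ} {U : Matrix (Fin m) (Fin n) ℝ}
    {V : Matrix (Fin n) (Fin n) ℝ} (hU : Uᵀ * U = 1) (hV : Vᵀ * V = 1) (d : Fin n → ℝ) :
    frob (U * diagonal d * Vᵀ) = √(∑ i, d i ^ 2) := by
  rw [frob, sum_sum_sq_mul_diagonal_mul_transpose hU hV]

theorem stmt_11_general {n p : ℕ} (X U : Matrix (Fin n) (Fin p) ℝ)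
    (V : Matrix (Fin p) (Fin p) ℝ) (σ : Fin p → ℝ)
    (hU : Uᵀ * U = 1) (hV : Vᵀ * V = 1)
    (hσ : ∀ i, 0 ≤ σ i)
    (hX : X = U * Matrix.diagonal σ * Vᵀ) :
    frob (X - U * Vᵀ) ≤ frob (Xᵀ * X - 1) := by
  subst hX
  rw [mul_diagonal_mul_transpose_sub,
    gram_mul_diagonal_mul_transpose_sub_one hU (mul_eq_one_comm.mp hV),
    frob_mul_diagonal_mul_transpose hU hV, frob_mul_diagonal_mul_transpose hV hV]
  refine Real.sqrt_le_sqrt (Finset.sum_le_sum fun i _ => ?_)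
  exact sq_le_sq.mpr (abs_sub_one_le_abs_sq_sub_one (hσ i))

/-- For any economical SVD `X = U Σ Vᵀ` with orthonormal `U`, orthogonal `V` and
nonnegative diagonal `Σ`, the polar factor `U Vᵀ` satisfies
`‖X - U Vᵀ‖_F ≤ ‖XᵀX - Iₚ‖_F`. -/
theorem stmt_11 {n p : ℕ} (X U : Matrix (Fin n) (Fin p) ℝ)
    (V : Matrix (Fin p) (Fin p) ℝ) (σ : Fin p → ℝ)
    (hU : Uᵀ * U = 1) (hV : Vᵀ * V = 1) (hV' : V * Vᵀ = 1)
    (hσ : ∀ i, 0 ≤ σ i)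
    (hX : X = U * Matrix.diagonal σ * Vᵀ) :
    frob (X - U * Vᵀ) ≤ frob (Xᵀ * X - 1) :=
  stmt_11_general X U V σ hU hV hσ hX
end

section
/- Suppose Y_0 ∈ ℝ^{n×p} satisfies ‖Y_0^T Y_0 - I_p‖_F ≤ 1/6 and the sequence {Y_k} is generated by Y_{k+1} = Y_k - η_k (D_k + β Y_k (Y_k^T Y_k - I_p)), where ‖D_k‖_F ≤ M_2 for all k, β ≥ 60 M_2 > 0, and 0 < η_k ≤ 1/(2β). Then ‖Y_k^T Y_k - I_p‖_F ≤ 1/6 for all k ≥ 0. -/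
/-!
Write `X = YᵀY - 1` and `G = D + β Y X` for the current iterate. Expanding the update gives
`Y₊ᵀY₊ - 1 = (1 - 2ηβ) X - 2ηβ X² - η (YᵀD + DᵀY) + η² GᵀG`. When `‖X‖_F ≤ 1/6` the first two
terms have norm at most `1/6 - 5ηβ/18`, while `β ≥ 60 M₂` and `ηβ ≤ 1/2` make the other two at most
`11ηβ/300` and `(ηβ/5)² ≤ ηβ/50`. The one estimate beyond Frobenius submultiplicativity is
`‖Y Z‖_F ≤ √(1 + ‖X‖_F) ‖Z‖_F`, which follows from `‖Y Z‖_F² = tr (ZᵀZ) + tr (Zᵀ X Z)` and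
Cauchy–Schwarz for the trace pairing; by the same duality it also bounds `‖YᵀD‖_F`.
-/

open Matrix

section FrobeniusNorm

attribute [local instance] Matrix.frobeniusSeminormedAddCommGroup Matrix.frobeniusNormedSpace

theorem frob_eq_norm {m n : ℕ} (A : Matrix (Fin m) (Fin n) ℝ) : frob A = ‖A‖ := by
  simp only [frob, frobenius_norm_def, Real.norm_eq_abs, sq_abs, Real.sqrt_eq_rpow, Real.rpow_two]

theorem frob_add_le {m n : ℕ} (A B : Matrix (Fin m) (Fin n) ℝ) :
    frob (A + B) ≤ frob A + frob B := by
  simpa only [frob_eq_norm] using norm_add_le A B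

theorem frob_sub_le {m n : ℕ} (A B : Matrix (Fin m) (Fin n) ℝ) :
    frob (A - B) ≤ frob A + frob B := by
  simpa only [frob_eq_norm] using norm_sub_le A B

theorem frob_smul {m n : ℕ} (c : ℝ) (A : Matrix (Fin m) (Fin n) ℝ) :
    frob (c • A) = |c| * frob A := by
  simp only [frob_eq_norm, norm_smul, Real.norm_eq_abs]

theorem frob_mul_le {m n k : ℕ} (A : Matrix (Fin m) (Fin n) ℝ) (B : Matrix (Fin n) (Fin k) ℝ) :
    frob (A * B) ≤ frob A * frob B := by
  simpa only [frob_eq_norm] using frobenius_norm_mul A B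

theorem frob_transpose {m n : ℕ} (A : Matrix (Fin m) (Fin n) ℝ) : frob Aᵀ = frob A := by
  simp only [frob_eq_norm, frobenius_norm_transpose]

end FrobeniusNorm

theorem frob_nonneg {m n : ℕ} (A : Matrix (Fin m) (Fin n) ℝ) : 0 ≤ frob A :=
  Real.sqrt_nonneg _

theorem trace_transpose_mul_eq_sum {m n : ℕ} (A B : Matrix (Fin m) (Fin n) ℝ) :
    (Aᵀ * B).trace = ∑ i, ∑ j, A i j * B i j := by
  simp only [trace, diag, mul_apply, transpose_apply]
  exact Finset.sum_comm

theorem frob_sq_eq_trace {m n : ℕ} (A : Matrix (Fin m) (Fin n) ℝ) :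
    frob A ^ 2 = (Aᵀ * A).trace := by
  rw [frob, Real.sq_sqrt (by positivity), trace_transpose_mul_eq_sum]
  simp only [sq]

theorem trace_transpose_mul_le {m n : ℕ} (A B : Matrix (Fin m) (Fin n) ℝ) :
    (Aᵀ * B).trace ≤ frob A * frob B := by
  simp only [trace_transpose_mul_eq_sum, frob, ← Finset.sum_product']
  exact Real.sum_mul_le_sqrt_mul_sqrt _ _ _

theorem frob_mul_le_sqrt {n p k : ℕ} (Y : Matrix (Fin n) (Fin p) ℝ) (Z : Matrix (Fin p) (Fin k) ℝ) :
    frob (Y * Z) ≤ √(1 + frob (Yᵀ * Y - 1)) * frob Z := by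
  have hsq : frob (Y * Z) ^ 2 ≤ (1 + frob (Yᵀ * Y - 1)) * frob Z ^ 2 :=
    calc frob (Y * Z) ^ 2 = (Zᵀ * Z).trace + (Zᵀ * ((Yᵀ * Y - 1) * Z)).trace := by
          rw [frob_sq_eq_trace, ← trace_add, ← Matrix.mul_add, Matrix.sub_mul, Matrix.one_mul,
            add_sub_cancel, transpose_mul, Matrix.mul_assoc, Matrix.mul_assoc]
      _ ≤ frob Z ^ 2 + frob Z * (frob (Yᵀ * Y - 1) * frob Z) := by
          rw [frob_sq_eq_trace]
          gcongr
          exact (trace_transpose_mul_le _ _).trans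
            (mul_le_mul_of_nonneg_left (frob_mul_le _ _) (frob_nonneg _))
      _ = (1 + frob (Yᵀ * Y - 1)) * frob Z ^ 2 := by ring
  calc frob (Y * Z) = √(frob (Y * Z) ^ 2) := (Real.sqrt_sq (frob_nonneg _)).symm
    _ ≤ √((1 + frob (Yᵀ * Y - 1)) * frob Z ^ 2) := Real.sqrt_le_sqrt hsq
    _ = √(1 + frob (Yᵀ * Y - 1)) * frob Z := by
      rw [Real.sqrt_mul (by linarith [frob_nonneg (Yᵀ * Y - 1)]), Real.sqrt_sq (frob_nonneg _)]

theorem frob_transpose_mul_le_sqrt {n p k : ℕ} (Y : Matrix (Fin n) (Fin p) ℝ)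
    (D : Matrix (Fin n) (Fin k) ℝ) :
    frob (Yᵀ * D) ≤ √(1 + frob (Yᵀ * Y - 1)) * frob D := by
  have h : frob (Yᵀ * D) ^ 2 ≤ (√(1 + frob (Yᵀ * Y - 1)) * frob D) * frob (Yᵀ * D) :=
    calc frob (Yᵀ * D) ^ 2 = (Dᵀ * (Y * (Yᵀ * D))).trace := by
          rw [frob_sq_eq_trace, transpose_mul, transpose_transpose, Matrix.mul_assoc]
      _ ≤ frob D * frob (Y * (Yᵀ * D)) := trace_transpose_mul_le _ _
      _ ≤ frob D * (√(1 + frob (Yᵀ * Y - 1)) * frob (Yᵀ * D)) :=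
          mul_le_mul_of_nonneg_left (frob_mul_le_sqrt _ _) (frob_nonneg _)
      _ = _ := by ring
  rw [sq] at h
  rcases (frob_nonneg (Yᵀ * D)).eq_or_lt with h0 | hpos
  · rw [← h0]; exact mul_nonneg (Real.sqrt_nonneg _) (frob_nonneg _)
  · exact le_of_mul_le_mul_right h hpos

theorem gram_sub_one_of_step {n p : ℕ} (Y D G : Matrix (Fin n) (Fin p) ℝ)
    (X : Matrix (Fin p) (Fin p) ℝ) (η β : ℝ) (hX : Yᵀ * Y - 1 = X) (hG : D + β • (Y * X) = G) :
    (Y - η • G)ᵀ * (Y - η • G) - 1 =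
      (1 - 2 * η * β) • X - (2 * η * β) • (X * X) - η • (Yᵀ * D + Dᵀ * Y) + η ^ 2 • (Gᵀ * G) := by
  have hXT : Xᵀ = X := by
    rw [← hX, transpose_sub, transpose_mul, transpose_transpose, transpose_one]
  have hYY : Yᵀ * Y = 1 + X := by rw [← hX]; abel
  have hYG : Yᵀ * G = Yᵀ * D + β • (X + X * X) := by
    rw [← hG, Matrix.mul_add, Matrix.mul_smul, ← Matrix.mul_assoc, hYY, Matrix.add_mul,
      Matrix.one_mul]
  have hGY : Gᵀ * Y = Dᵀ * Y + β • (X + X * X) := by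
    rw [← hG, transpose_add, transpose_smul, transpose_mul, hXT, Matrix.add_mul,
      Matrix.smul_mul, Matrix.mul_assoc, hYY, Matrix.mul_add, Matrix.mul_one]
  calc (Y - η • G)ᵀ * (Y - η • G) - 1
      = (Yᵀ * Y - 1) - η • (Yᵀ * G) - η • (Gᵀ * Y) + (η * η) • (Gᵀ * G) := by
        simp only [transpose_sub, transpose_smul, Matrix.sub_mul, Matrix.mul_sub,
          Matrix.smul_mul, Matrix.mul_smul]
        module
    _ = _ := by
        rw [hYG, hGY, hX]
        module

theorem frob_gram_step_le {n p : ℕ} (Y D : Matrix (Fin n) (Fin p) ℝ) {η β h M : ℝ}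
    (hη : 0 ≤ η) (hβ : 0 ≤ β) (hηβ : 2 * η * β ≤ 1)
    (hX : frob (Yᵀ * Y - 1) ≤ h) (hD : frob D ≤ M) :
    frob ((Y - η • (D + β • (Y * (Yᵀ * Y - 1))))ᵀ * (Y - η • (D + β • (Y * (Yᵀ * Y - 1)))) - 1)
      ≤ (1 - 2 * η * β) * h + 2 * η * β * h ^ 2 + η * (2 * √(1 + h) * M)
        + η ^ 2 * (M + β * (√(1 + h) * h)) ^ 2 := by
  set X := Yᵀ * Y - 1
  set G := D + β • (Y * X)
  set s := √(1 + h)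
  rw [gram_sub_one_of_step Y D G X η β rfl rfl]
  have hs : √(1 + frob X) ≤ s := Real.sqrt_le_sqrt (by linarith)
  have hX0 : 0 ≤ frob X := frob_nonneg X
  have hXX : frob (X * X) ≤ h ^ 2 := (frob_mul_le X X).trans (by nlinarith)
  have hYD : frob (Yᵀ * D) ≤ s * M :=
    (frob_transpose_mul_le_sqrt Y D).trans
      (mul_le_mul hs hD (frob_nonneg D) (Real.sqrt_nonneg _))
  have hYDsym : frob (Yᵀ * D + Dᵀ * Y) ≤ 2 * s * M := by
    have hDY : Dᵀ * Y = (Yᵀ * D)ᵀ := by rw [transpose_mul, transpose_transpose]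
    calc frob (Yᵀ * D + Dᵀ * Y) ≤ frob (Yᵀ * D) + frob (Yᵀ * D) := by
          rw [hDY]; exact (frob_add_le _ _).trans_eq (by rw [frob_transpose])
      _ ≤ 2 * s * M := by linarith
  have hG : frob G ≤ M + β * (s * h) := by
    have hYX : frob (Y * X) ≤ s * h :=
      (frob_mul_le_sqrt Y X).trans (mul_le_mul hs hX hX0 (Real.sqrt_nonneg _))
    calc frob G ≤ frob D + |β| * frob (Y * X) := by rw [← frob_smul]; exact frob_add_le _ _
      _ ≤ M + β * (s * h) := by rw [abs_of_nonneg hβ]; gcongr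
  have hGG : frob (Gᵀ * G) ≤ (M + β * (s * h)) ^ 2 := by
    calc frob (Gᵀ * G) ≤ frob G ^ 2 := (frob_mul_le _ _).trans_eq (by rw [frob_transpose, sq])
      _ ≤ _ := pow_le_pow_left₀ (frob_nonneg G) hG 2
  calc _ ≤ frob ((1 - 2 * η * β) • X) + frob ((2 * η * β) • (X * X))
        + frob (η • (Yᵀ * D + Dᵀ * Y)) + frob (η ^ 2 • (Gᵀ * G)) := by
        grw [frob_add_le, frob_sub_le, frob_sub_le]
    _ = (1 - 2 * η * β) * frob X + 2 * η * β * frob (X * X)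
        + η * frob (Yᵀ * D + Dᵀ * Y) + η ^ 2 * frob (Gᵀ * G) := by
        simp only [frob_smul, abs_of_nonneg (sub_nonneg.2 hηβ), abs_of_nonneg hη, abs_sq,
          abs_of_nonneg (by positivity : 0 ≤ 2 * η * β)]
    _ ≤ _ := by gcongr

theorem step_bound_le_one_sixth {η β M : ℝ} (hη : 0 ≤ η) (hM : 0 ≤ M) (hβM : 60 * M ≤ β)
    (hηβ : 2 * η * β ≤ 1) :
    (1 - 2 * η * β) * (1 / 6) + 2 * η * β * (1 / 6) ^ 2 + η * (2 * √(1 + 1 / 6) * M)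
      + η ^ 2 * (M + β * (√(1 + 1 / 6) * (1 / 6))) ^ 2 ≤ 1 / 6 := by
  have hs : √(1 + 1 / 6 : ℝ) ≤ 11 / 10 := Real.sqrt_le_iff.2 ⟨by norm_num, by norm_num⟩
  have hβ : 0 ≤ β := by linarith
  have hD : η * (2 * √(1 + 1 / 6) * M) ≤ 11 / 300 * (η * β) :=
    calc η * (2 * √(1 + 1 / 6) * M) ≤ η * (2 * (11 / 10) * (β / 60)) := by gcongr; linarith
      _ = 11 / 300 * (η * β) := by ring
  have hG : η * (M + β * (√(1 + 1 / 6) * (1 / 6))) ≤ η * β / 5 :=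
    calc η * (M + β * (√(1 + 1 / 6) * (1 / 6))) ≤ η * (β / 60 + β * (11 / 10 * (1 / 6))) := by
          gcongr; linarith
      _ = η * β / 5 := by ring
  have hG2 : η ^ 2 * (M + β * (√(1 + 1 / 6) * (1 / 6))) ^ 2 ≤ η * β / 50 :=
    calc η ^ 2 * (M + β * (√(1 + 1 / 6) * (1 / 6))) ^ 2
        = (η * (M + β * (√(1 + 1 / 6) * (1 / 6)))) ^ 2 := by ring
      _ ≤ (η * β / 5) ^ 2 := by gcongr
      _ ≤ η * β / 50 := by nlinarith [mul_nonneg hη hβ]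
  linarith [mul_nonneg hη hβ]

theorem frob_gram_step_le_one_sixth {n p : ℕ} (Y D : Matrix (Fin n) (Fin p) ℝ) {η β M : ℝ}
    (hη : 0 ≤ η) (hηβ : 2 * η * β ≤ 1) (hβM : 60 * M ≤ β)
    (hX : frob (Yᵀ * Y - 1) ≤ 1 / 6) (hD : frob D ≤ M) :
    frob ((Y - η • (D + β • (Y * (Yᵀ * Y - 1))))ᵀ * (Y - η • (D + β • (Y * (Yᵀ * Y - 1)))) - 1)
      ≤ 1 / 6 := by
  have hM : 0 ≤ M := (frob_nonneg D).trans hD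
  exact (frob_gram_step_le Y D hη (by linarith) hηβ hX hD).trans
    (step_bound_le_one_sixth hη hM hβM hηβ)

theorem stmt_15 {n p : ℕ} (Y D : ℕ → Matrix (Fin n) (Fin p) ℝ)
    (η : ℕ → ℝ) (β M₂ : ℝ)
    (hM₂ : ∀ k, frob (D k) ≤ M₂)
    (hβ : β ≥ 60 * M₂) (hβ' : 0 < β)
    (hη : ∀ k, 0 < η k) (hη' : ∀ k, η k ≤ 1 / (2 * β))
    (h0 : frob ((Y 0)ᵀ * Y 0 - 1) ≤ 1 / 6)
    (hrec : ∀ k, Y (k + 1) =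
      Y k - η k • (D k + β • (Y k * ((Y k)ᵀ * Y k - 1)))) :
    ∀ k, frob ((Y k)ᵀ * Y k - 1) ≤ 1 / 6 := by
  intro k
  induction k with
  | zero => exact h0
  | succ k ih =>
    have hηβ : 2 * η k * β ≤ 1 := by
      have := (le_div_iff₀ (by positivity)).1 (hη' k)
      linarith
    rw [hrec k]
    exact frob_gram_step_le_one_sixth (Y k) (D k) (hη k).le hηβ hβ ih (hM₂ k)
end

section
/- Among mappings of the form Ã(X) = X(α_0 I_p + α_1 X^T X + α_2 (X^T X)^2) with real coefficients satisfying α_0 + α_1 + α_2 = 1 and α_0 + 3α_1 + 5α_2 = 0, the choice (α_0, α_1, α_2) = (15/8, -5/4, 3/8) is the unique one for which the scalar function ψ(t) = α_0 t + α_1 t^3 + α_2 t^5 is monotone (nondecreasing) on all of ℝ. -/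
/-! The constraint `α₀ + 3α₁ + 5α₂ = 0` says `ψ'(1) = 0`. If `ψ` is monotone then `ψ' ≥ 0`
everywhere, so `1` is a minimum of `ψ'` and `ψ''(1) = 6α₁ + 20α₂` vanishes as well; together
with `α₀ + α₁ + α₂ = 1` this linear system has the unique solution `(15/8, -5/4, 3/8)`.
Conversely, for these coefficients `ψ'(t) = 15/8 (t² - 1)² ≥ 0`. -/

theorem Monotone.deriv2_eq_zero_of_deriv_eq_zero {f f' : ℝ → ℝ} {f'' x : ℝ} (hf : Monotone f)
    (hf' : ∀ t, HasDerivAt f (f' t) t) (hx : f' x = 0) (hf'' : HasDerivAt f' f'' x) :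
    f'' = 0 := by
  have hmin : IsLocalMin f' x :=
    Filter.Eventually.of_forall fun t => hx ▸ (hf' t).nonneg_of_monotone hf
  exact hmin.hasDerivAt_eq_zero hf''

theorem hasDerivAt_odd_quintic (a b c t : ℝ) :
    HasDerivAt (fun t : ℝ => a * t + b * t ^ 3 + c * t ^ 5)
      (a + 3 * b * t ^ 2 + 5 * c * t ^ 4) t := by
  refine ((((hasDerivAt_id t).const_mul a).add ((hasDerivAt_pow 3 t).const_mul b)).add
    ((hasDerivAt_pow 5 t).const_mul c)).congr_deriv ?_
  push_cast
  ring

theorem hasDerivAt_even_quartic (a b c t : ℝ) :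
    HasDerivAt (fun t : ℝ => a + 3 * b * t ^ 2 + 5 * c * t ^ 4)
      (6 * b * t + 20 * c * t ^ 3) t := by
  refine ((((hasDerivAt_pow 2 t).const_mul (3 * b)).const_add a).add
    ((hasDerivAt_pow 4 t).const_mul (5 * c))).congr_deriv ?_
  push_cast
  ring

theorem monotone_odd_quintic_15_8 :
    Monotone (fun t : ℝ => 15 / 8 * t + -5 / 4 * t ^ 3 + 3 / 8 * t ^ 5) :=
  monotone_of_hasDerivAt_nonneg (hasDerivAt_odd_quintic _ _ _) fun t => by
    have hsq : 15 / 8 + 3 * (-5 / 4) * t ^ 2 + 5 * (3 / 8) * t ^ 4 = 15 / 8 * (t ^ 2 - 1) ^ 2 := by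
      ring
    simp only [Pi.zero_apply, hsq]
    positivity

theorem stmt_19 (α₀ α₁ α₂ : ℝ) (h1 : α₀ + α₁ + α₂ = 1)
    (h2 : α₀ + 3 * α₁ + 5 * α₂ = 0) :
    Monotone (fun t : ℝ => α₀ * t + α₁ * t ^ 3 + α₂ * t ^ 5) ↔
      (α₀, α₁, α₂) = (15 / 8, -5 / 4, 3 / 8) := by
  constructor
  · intro hψ
    have h3 : 6 * α₁ * 1 + 20 * α₂ * 1 ^ 3 = 0 :=
      hψ.deriv2_eq_zero_of_deriv_eq_zero (hasDerivAt_odd_quintic α₀ α₁ α₂) (by linarith)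
        (hasDerivAt_even_quartic α₀ α₁ α₂ 1)
    simp only [Prod.mk.injEq]
    refine ⟨?_, ?_, ?_⟩ <;> linarith
  · intro h
    simp only [Prod.mk.injEq] at h
    obtain ⟨rfl, rfl, rfl⟩ := h
    exact monotone_odd_quintic_15_8
end
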